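/- arXiv:1707.03102 — 4 statements merged into one kernel-verified Lean document; each statement's English description precedes it below -/
import Mathlib

section
/- Let X be a process with cadlag paths in R^d, I = [a, a + t] an interval, θ > 0, and define τ_0 = a, τ_j = inf{ s > τ_{j−1} : |X(s) − X(τ_{j−1})| > θ }. If τ_k − τ_0 > t, then the image X(I) can be covered by k balls of radius θ. -/
/-!
Just before the exit time `τ (j + 1)`, the path is still within `θ` of `f (τ j)`, by the
definition of `τ (j + 1)` as an infimum. Since `τ k` lies beyond `a + t`, every `s ∈ [a, a + t]`
falls in one of the windows `[τ j, τ (j + 1))` with `j < k`, so the balls of radius `θ` around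
`f (τ 0), …, f (τ (k - 1))` cover the image.
-/

open Metric Set ENNReal

noncomputable def exitTime {E : Type*} [PseudoMetricSpace E] (f : ℝ → E) (θ : ℝ) (σ : ℝ≥0∞) :
    ℝ≥0∞ :=
  sInf {s : ℝ≥0∞ | σ < s ∧ s ≠ ⊤ ∧ θ < dist (f s.toReal) (f σ.toReal)}

theorem dist_le_of_le_of_lt_exitTime {E : Type*} [PseudoMetricSpace E] {f : ℝ → E} {θ : ℝ}
    (hθ : 0 ≤ θ) {σ : ℝ≥0∞} {s : ℝ} (hs : 0 ≤ s) (hσs : σ ≤ ENNReal.ofReal s)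
    (hs_lt : ENNReal.ofReal s < exitTime f θ σ) : dist (f s) (f σ.toReal) ≤ θ := by
  by_contra! hfar
  have hσ_lt : σ < ENNReal.ofReal s := by
    refine hσs.lt_of_ne fun hσ => ?_
    rw [hσ, toReal_ofReal hs, dist_self] at hfar
    linarith
  have hmem : ENNReal.ofReal s ∈
      {u : ℝ≥0∞ | σ < u ∧ u ≠ ⊤ ∧ θ < dist (f u.toReal) (f σ.toReal)} :=
    ⟨hσ_lt, ofReal_ne_top, by rwa [toReal_ofReal hs]⟩
  exact (sInf_le hmem).not_gt hs_lt

theorem Nat.exists_le_and_lt_succ_of_le_of_lt {α : Type*} [LinearOrder α] (u : ℕ → α) {x : α}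
    {k : ℕ} (h0 : u 0 ≤ x) (hk : x < u k) : ∃ j < k, u j ≤ x ∧ x < u (j + 1) := by
  induction k with
  | zero => exact absurd hk h0.not_gt
  | succ k ih =>
    by_cases hxk : x < u k
    · obtain ⟨j, hjk, hj⟩ := ih hxk
      exact ⟨j, by omega, hj⟩
    · exact ⟨k, k.lt_succ_self, not_lt.1 hxk, hk⟩

theorem stmt1_general {d : ℕ} (f : ℝ → EuclideanSpace ℝ (Fin d))
    (a t θ : ℝ) (ha : 0 ≤ a) (hθ : 0 < θ)
    (τ : ℕ → ℝ≥0∞)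
    (hτ0 : τ 0 = ENNReal.ofReal a)
    (hτ : ∀ j : ℕ, τ (j + 1) =
      sInf {s : ℝ≥0∞ | τ j < s ∧ s ≠ ⊤ ∧ θ < dist (f s.toReal) (f (τ j).toReal)})
    (k : ℕ)
    (hk : ENNReal.ofReal t < τ k - τ 0) :
    ∃ c : Fin k → EuclideanSpace ℝ (Fin d),
      f '' Set.Icc a (a + t) ⊆ ⋃ i : Fin k, Metric.closedBall (c i) θ := by
  rw [hτ0] at hk
  have hend : ENNReal.ofReal (a + t) < τ k := ofReal_add_le.trans_lt (lt_tsub_iff_left.1 hk)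
  refine ⟨fun i => f (τ i).toReal, ?_⟩
  rintro _ ⟨s, hs, rfl⟩
  obtain ⟨j, hjk, hτj, hτj_succ⟩ := Nat.exists_le_and_lt_succ_of_le_of_lt τ
    (hτ0 ▸ ofReal_le_ofReal hs.1) ((ofReal_le_ofReal hs.2).trans_lt hend)
  have hτ_exit : τ (j + 1) = exitTime f θ (τ j) := hτ j
  refine mem_iUnion.2 ⟨⟨j, hjk⟩, mem_closedBall.2 ?_⟩
  exact dist_le_of_le_of_lt_exitTime hθ.le (ha.trans hs.1) hτj (hτ_exit ▸ hτj_succ)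

/-- For a cadlag path `f : [0,∞) → ℝ^d`, with the successive exit times
`τ_0 = a`, `τ_{j+1} = inf {s > τ_j : |f(s) - f(τ_j)| > θ}` (values in `ℝ≥0∞`, `inf ∅ = ∞`),
if `τ_k - τ_0 > t` then the image `f([a, a+t])` is covered by `k` closed balls of radius `θ`. -/
theorem stmt1 {d : ℕ} (f : ℝ → EuclideanSpace ℝ (Fin d))
    (hrc : ∀ s : ℝ, ContinuousWithinAt f (Set.Ici s) s)
    (hll : ∀ s : ℝ, ∃ L : EuclideanSpace ℝ (Fin d),
      Filter.Tendsto f (nhdsWithin s (Set.Iio s)) (nhds L))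
    (a t θ : ℝ) (ha : 0 ≤ a) (ht : 0 < t) (hθ : 0 < θ)
    (τ : ℕ → ℝ≥0∞)
    (hτ0 : τ 0 = ENNReal.ofReal a)
    (hτ : ∀ j : ℕ, τ (j + 1) =
      sInf {s : ℝ≥0∞ | τ j < s ∧ s ≠ ⊤ ∧ θ < dist (f s.toReal) (f (τ j).toReal)})
    (k : ℕ)
    (hk : ENNReal.ofReal t < τ k - τ 0) :
    ∃ c : Fin k → EuclideanSpace ℝ (Fin d),
      f '' Set.Icc a (a + t) ⊆ ⋃ i : Fin k, Metric.closedBall (c i) θ :=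
  stmt1_general f a t θ ha hθ τ hτ0 hτ k hk
end

section
/- Suppose f : [0,∞) → R^d has the following property: there are constants H > 0, K ≥ 1, and for each n ≥ 1, with t_n = 2^{−n}, every dyadic interval I = [(j−1)t_n, j t_n] ⊆ [0,1] (for n sufficiently large) has image f(I) covered by K balls of radius t_n^γ, where 0 < γ < H. Then for every Borel set E ⊆ [0,1], the Hausdorff dimension of f(E) satisfies dim_H f(E) ≤ (dim_H E)/γ. -/
open MeasureTheory Metric Set ENNReal

noncomputable section

/-!
Suppose `μH[t] E = 0`. Then `E` can be covered by intervals `[a, a + 2⁻ⁿ]` with `∑ 2^{-nt}`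
arbitrarily small (the dyadic length `2⁻ⁿ` is chosen between `diam U` and `2 diam U` for the sets
`U` of an almost optimal cover). Each such interval meets `[0, 1]` inside two dyadic intervals of
generation `n`, so its image lies in `2K` balls of radius `2^{-nγ}`, whose `(t/γ)`-dimensional
contributions add up to a constant times `2^{-nt}`. Hence `μH[t/γ] (f '' E) = 0` whenever
`μH[t] E = 0`, and this transfers to Hausdorff dimensions.
-/

open Filter Topology
open scoped NNReal

section HausdorffNull

variable {X : Type*} [EMetricSpace X] [MeasurableSpace X] [BorelSpace X] {d : ℝ} {s : Set X}

theorem exists_cover_tsum_ediam_rpow_lt_of_hausdorffMeasure_eq_zero (hd : 0 < d)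
    (hs : μH[d] s = 0) {r ε : ℝ≥0∞} (hr : 0 < r) (hε : 0 < ε) :
    ∃ U : ℕ → Set X, s ⊆ ⋃ i, U i ∧ (∀ i, ediam (U i) ≤ r) ∧ ∑' i, ediam (U i) ^ d < ε := by
  have hlt : (⨅ (U : ℕ → Set X) (_ : s ⊆ ⋃ i, U i) (_ : ∀ i, ediam (U i) ≤ r),
      ∑' i, ⨆ _ : (U i).Nonempty, ediam (U i) ^ d) < ε := by
    refine lt_of_le_of_lt ?_ (hs ▸ hε)
    rw [Measure.hausdorffMeasure_apply]
    exact le_iSup₂_of_le r hr le_rfl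
  simp only [iInf_lt_iff] at hlt
  obtain ⟨U, hcov, hdiam, hsum⟩ := hlt
  refine ⟨U, hcov, hdiam, lt_of_le_of_lt (ENNReal.tsum_le_tsum fun i => ?_) hsum⟩
  rcases (U i).eq_empty_or_nonempty with h | h
  · simp [h, hd]
  · exact le_iSup_of_le h le_rfl

theorem hausdorffMeasure_eq_zero_of_forall_cover {ι : Type*} [Countable ι] {C : ℝ≥0∞}
    (hC : C ≠ ∞) (h : ∀ ε > 0, ∃ U : ι → Set X,
      s ⊆ ⋃ i, U i ∧ (∀ i, ediam (U i) ≤ ε) ∧ ∑' i, ediam (U i) ^ d ≤ C * ε) :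
    μH[d] s = 0 := by
  choose U hcov hdiam hsum using fun k : ℕ => h (k : ℝ≥0∞)⁻¹ (by simp)
  refine le_antisymm ?_ zero_le
  calc μH[d] s ≤ liminf (fun k => ∑' i, ediam (U k i) ^ d) atTop :=
        Measure.hausdorffMeasure_le_liminf_tsum d s _ ENNReal.tendsto_inv_nat_nhds_zero U
          (Eventually.of_forall hdiam) (Eventually.of_forall hcov)
    _ ≤ liminf (fun k : ℕ => C * (k : ℝ≥0∞)⁻¹) atTop :=
        liminf_le_liminf (Eventually.of_forall hsum)
    _ = 0 := by
        simpa using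
          (ENNReal.Tendsto.const_mul ENNReal.tendsto_inv_nat_nhds_zero (Or.inr hC)).liminf_eq

theorem dimH_le_div_of_hausdorffMeasure_eq_zero {Y : Type*} [EMetricSpace Y]
    [MeasurableSpace Y] [BorelSpace Y] {B : Set Y} {γ : ℝ} (hγ : 0 < γ)
    (h : ∀ t : ℝ, 0 < t → μH[t] s = 0 → μH[t / γ] B = 0) :
    dimH B ≤ dimH s / ENNReal.ofReal γ := by
  rw [ENNReal.le_div_iff_mul_le (Or.inl (ENNReal.ofReal_pos.2 hγ).ne') (Or.inl ofReal_ne_top)]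
  refine le_of_forall_gt fun c hc => ?_
  obtain ⟨t, hst, htc⟩ := ENNReal.lt_iff_exists_nnreal_btwn.1 hc
  have ht : (0 : ℝ) < t := NNReal.coe_pos.2 (ENNReal.coe_pos.1 (lt_of_le_of_lt zero_le hst))
  let u : ℝ≥0 := ⟨t / γ, by positivity⟩
  have hB : μH[u] B = 0 := h t ht (hausdorffMeasure_of_dimH_lt hst)
  calc dimH B * ENNReal.ofReal γ ≤ u * ENNReal.ofReal γ := by
        gcongr; exact dimH_le_of_hausdorffMeasure_ne_top (by simp [hB])
    _ = t := by
        have hu : (u : ℝ) * γ = t := div_mul_cancel₀ _ hγ.ne'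
        rw [← ENNReal.ofReal_coe_nnreal, ← ENNReal.ofReal_mul u.coe_nonneg, hu,
          ENNReal.ofReal_coe_nnreal]
    _ < c := htc

end HausdorffNull

def dyadicInterval (n j : ℕ) : Set ℝ :=
  Icc (((j : ℝ) - 1) * (2 : ℝ)⁻¹ ^ n) ((j : ℝ) * (2 : ℝ)⁻¹ ^ n)

theorem mem_dyadicInterval_iff {n j : ℕ} {x : ℝ} :
    x ∈ dyadicInterval n j ↔ (j : ℝ) - 1 ≤ x * 2 ^ n ∧ x * 2 ^ n ≤ j := by
  simp only [dyadicInterval, mem_Icc, inv_pow, ← div_eq_mul_inv]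
  rw [div_le_iff₀ (by positivity), le_div_iff₀ (by positivity)]

theorem exists_dyadicInterval_cover_Icc_inter_unitInterval {a : ℝ} (ha : 0 ≤ a) (n : ℕ) :
    ∃ j : Fin 2 → ℕ, (∀ b, 1 ≤ j b ∧ j b ≤ 2 ^ n) ∧
      Icc a (a + (2 : ℝ)⁻¹ ^ n) ∩ Icc 0 1 ⊆ ⋃ b, dyadicInterval n (j b) := by
  have hpow : 1 ≤ 2 ^ n := Nat.one_le_two_pow
  set m := ⌊a * 2 ^ n⌋₊
  refine ⟨![min (m + 1) (2 ^ n), min (m + 2) (2 ^ n)], ?_, ?_⟩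
  · simp only [Fin.forall_fin_two, Matrix.cons_val_zero, Matrix.cons_val_one]
    omega
  rintro x ⟨⟨hax, hxa⟩, -, hx1⟩
  have hm : (m : ℝ) ≤ a * 2 ^ n := Nat.floor_le (by positivity)
  have hm' : a * 2 ^ n < m + 1 := Nat.lt_floor_add_one _
  have hlo : a * 2 ^ n ≤ x * 2 ^ n := by gcongr
  have hhi : x * 2 ^ n ≤ a * 2 ^ n + 1 := by
    calc x * 2 ^ n ≤ (a + 2⁻¹ ^ n) * 2 ^ n := by gcongr
      _ = a * 2 ^ n + 1 := by rw [add_mul, ← mul_pow, inv_mul_cancel₀ two_ne_zero, one_pow]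
  have htop : x * 2 ^ n ≤ 2 ^ n := by
    simpa using mul_le_mul_of_nonneg_right hx1 (by positivity : (0 : ℝ) ≤ 2 ^ n)
  simp only [mem_iUnion, Fin.exists_fin_two, Matrix.cons_val_zero, Matrix.cons_val_one,
    mem_dyadicInterval_iff]
  push_cast
  by_cases hx : x * 2 ^ n ≤ m + 1
  · exact Or.inl ⟨by linarith [min_le_left ((m : ℝ) + 1) (2 ^ n)], le_min hx htop⟩
  · exact Or.inr ⟨by linarith [min_le_left ((m : ℝ) + 2) (2 ^ n)], le_min (by linarith) htop⟩

-- The slack `η` is needed for `δ = 0`, where no dyadic length is comparable to `δ`.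
theorem exists_two_inv_pow_between {δ t η : ℝ} {N : ℕ} (ht : 0 < t) (hδ : 0 ≤ δ)
    (hδN : δ ≤ 2⁻¹ ^ N) (hη : 0 < η) :
    ∃ n, N ≤ n ∧ δ ≤ 2⁻¹ ^ n ∧ (2⁻¹ ^ n) ^ t ≤ (2 * δ) ^ t + η := by
  have hq : (2⁻¹ : ℝ) ^ t < 1 := Real.rpow_lt_one (by norm_num) (by norm_num) ht
  rcases hδ.eq_or_lt with rfl | hδ
  · obtain ⟨k, hk⟩ := exists_pow_lt_of_lt_one hη hq
    refine ⟨N + k, by omega, by positivity, ?_⟩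
    rw [mul_zero, Real.zero_rpow ht.ne', zero_add, ← Real.rpow_pow_comm (by norm_num)]
    exact (pow_le_pow_of_le_one (by positivity) hq.le (by omega)).trans hk.le
  · obtain ⟨n, hlt, hle⟩ := exists_nat_pow_near_of_lt_one hδ
      (hδN.trans (pow_le_one₀ (by norm_num) (by norm_num))) (by norm_num)
      (by norm_num : (2⁻¹ : ℝ) < 1)
    have hNn : N < n + 1 := (pow_lt_pow_iff_right_of_lt_one₀ (by norm_num) (by norm_num)).1
      (hlt.trans_le hδN)
    have h2δ : (2⁻¹ : ℝ) ^ n ≤ 2 * δ := by rw [pow_succ] at hlt; linarith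
    exact ⟨n, by omega, hle,
      (Real.rpow_le_rpow (by positivity) h2δ ht.le).trans (le_add_of_nonneg_right hη.le)⟩

theorem exists_dyadicLength_Icc_superset {V : Set ℝ} {t η : ℝ} {N : ℕ} (ht : 0 < t)
    (hη : 0 < η) (hV : ediam V ≤ ENNReal.ofReal (2⁻¹ ^ N)) :
    ∃ n, N ≤ n ∧ V ⊆ Icc (sInf V) (sInf V + 2⁻¹ ^ n) ∧
      ENNReal.ofReal ((2⁻¹ ^ n) ^ t) ≤ 2 ^ t * ediam V ^ t + ENNReal.ofReal η := by
  have hbdd : Bornology.IsBounded V :=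
    isBounded_iff_ediam_ne_top.2 (ne_top_of_le_ne_top ofReal_ne_top hV)
  have hediam : ediam V = ENNReal.ofReal (diam V) :=
    (ENNReal.ofReal_toReal hbdd.ediam_ne_top).symm
  have hδN : diam V ≤ 2⁻¹ ^ N := by
    rwa [hediam, ENNReal.ofReal_le_ofReal_iff (by positivity)] at hV
  obtain ⟨n, hNn, hδn, hpow⟩ := exists_two_inv_pow_between ht diam_nonneg hδN hη
  refine ⟨n, hNn, fun x hx => ?_, ?_⟩
  · have hx' := hbdd.subset_Icc_sInf_sSup hx
    rw [Real.diam_eq hbdd] at hδn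
    exact ⟨hx'.1, by linarith [hx'.2]⟩
  · calc ENNReal.ofReal ((2⁻¹ ^ n) ^ t)
        ≤ ENNReal.ofReal ((2 * diam V) ^ t) + ENNReal.ofReal η :=
          (ENNReal.ofReal_le_ofReal hpow).trans ENNReal.ofReal_add_le
      _ = 2 ^ t * ediam V ^ t + ENNReal.ofReal η := by
          rw [← ENNReal.ofReal_rpow_of_nonneg (by positivity) ht.le,
            ENNReal.ofReal_mul zero_le_two, ENNReal.ofReal_ofNat,
            ENNReal.mul_rpow_of_nonneg _ _ ht.le, hediam]

theorem exists_dyadicLength_Icc_cover {E : Set ℝ} (hE : E ⊆ Icc 0 1) {t : ℝ} (ht : 0 < t)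
    (hEt : μH[t] E = 0) {ε : ℝ≥0∞} (hε : 0 < ε) (N : ℕ) :
    ∃ (a : ℕ → ℝ) (n : ℕ → ℕ), (∀ i, 0 ≤ a i ∧ N ≤ n i) ∧
      E ⊆ ⋃ i, Icc (a i) (a i + 2⁻¹ ^ n i) ∩ Icc 0 1 ∧
      ∑' i, ENNReal.ofReal ((2⁻¹ ^ n i) ^ t) ≤ (2 ^ t + 1) * ε := by
  obtain ⟨U, hcov, hdiam, hsum⟩ :=
    exists_cover_tsum_ediam_rpow_lt_of_hausdorffMeasure_eq_zero ht hEt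
      (ENNReal.ofReal_pos.2 (by positivity : (0 : ℝ) < 2⁻¹ ^ N)) hε
  obtain ⟨η, hη, hηsum⟩ := ENNReal.exists_pos_sum_of_countable hε.ne' ℕ
  choose n hNn hsub hle using fun i =>
    exists_dyadicLength_Icc_superset (η := η i) ht (NNReal.coe_pos.2 (hη i))
      ((ediam_mono inter_subset_left).trans (hdiam i) : ediam (U i ∩ Icc 0 1) ≤ _)
  refine ⟨fun i => sInf (U i ∩ Icc 0 1), n,
    fun i => ⟨Real.sInf_nonneg fun x hx => hx.2.1, hNn i⟩, ?_, ?_⟩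
  · intro x hx
    obtain ⟨i, hi⟩ := mem_iUnion.1 (hcov hx)
    exact mem_iUnion.2 ⟨i, hsub i ⟨hi, hE hx⟩, hE hx⟩
  · calc ∑' i, ENNReal.ofReal ((2⁻¹ ^ n i) ^ t)
        ≤ ∑' i, (2 ^ t * ediam (U i ∩ Icc 0 1) ^ t + η i) :=
          ENNReal.tsum_le_tsum fun i => (hle i).trans_eq (by rw [ENNReal.ofReal_coe_nnreal])
      _ = 2 ^ t * ∑' i, ediam (U i ∩ Icc 0 1) ^ t + ∑' i, (η i : ℝ≥0∞) := by
          rw [ENNReal.tsum_add, ENNReal.tsum_mul_left]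
      _ ≤ 2 ^ t * ε + ε := by
          gcongr
          exact (ENNReal.tsum_le_tsum fun i =>
            ENNReal.rpow_le_rpow (ediam_mono inter_subset_left) ht.le).trans hsum.le
      _ = (2 ^ t + 1) * ε := by ring

section DyadicBallCovers

variable {X : Type*} [MetricSpace X]

theorem ediam_closedBall_le_two_mul (x : X) {ρ : ℝ} (hρ : 0 ≤ ρ) :
    ediam (closedBall x ρ) ≤ 2 * ENNReal.ofReal ρ := by
  rw [← closedEBall_ofReal hρ]
  exact ediam_closedEBall_le

theorem ediam_closedBall_rpow_rpow_le (x : X) {ρ γ t : ℝ} (hρ : 0 ≤ ρ) (hγ : 0 < γ)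
    (ht : 0 ≤ t) :
    ediam (closedBall x (ρ ^ γ)) ^ (t / γ) ≤ 2 ^ (t / γ) * ENNReal.ofReal (ρ ^ t) := by
  have hs : 0 ≤ t / γ := by positivity
  calc ediam (closedBall x (ρ ^ γ)) ^ (t / γ) ≤ (2 * ENNReal.ofReal (ρ ^ γ)) ^ (t / γ) :=
        ENNReal.rpow_le_rpow (ediam_closedBall_le_two_mul _ (by positivity)) hs
    _ = 2 ^ (t / γ) * ENNReal.ofReal (ρ ^ t) := by
        rw [ENNReal.mul_rpow_of_nonneg _ _ hs, ENNReal.ofReal_rpow_of_nonneg (by positivity) hs,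
          ← Real.rpow_mul hρ, mul_div_cancel₀ _ hγ.ne']

theorem tsum_ediam_closedBall_rpow_le {ι : Type*} [Fintype ι] (c : ℕ → ι → X) (n : ℕ → ℕ)
    {γ t : ℝ} (hγ : 0 < γ) (ht : 0 ≤ t) :
    ∑' p : ℕ × ι, ediam (closedBall (c p.1 p.2) (((2 : ℝ)⁻¹ ^ n p.1) ^ γ)) ^ (t / γ) ≤
      Fintype.card ι * 2 ^ (t / γ) * ∑' i, ENNReal.ofReal ((2⁻¹ ^ n i) ^ t) := by
  calc ∑' p : ℕ × ι, ediam (closedBall (c p.1 p.2) (((2 : ℝ)⁻¹ ^ n p.1) ^ γ)) ^ (t / γ)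
      ≤ ∑' p : ℕ × ι, 2 ^ (t / γ) * ENNReal.ofReal ((2⁻¹ ^ n p.1) ^ t) :=
        ENNReal.tsum_le_tsum fun p => ediam_closedBall_rpow_rpow_le _ (by positivity) hγ ht
    _ = Fintype.card ι * 2 ^ (t / γ) * ∑' i, ENNReal.ofReal ((2⁻¹ ^ n i) ^ t) := by
        simp only [ENNReal.tsum_prod', tsum_fintype, Finset.sum_const, Finset.card_univ,
          nsmul_eq_mul, ENNReal.tsum_mul_left]
        ring

def HasDyadicBallCovers (f : ℝ → X) (γ : ℝ) (K n₀ : ℕ) : Prop :=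
  ∀ n, n₀ ≤ n → ∀ j, 1 ≤ j → j ≤ 2 ^ n →
    ∃ c : Fin K → X, f '' dyadicInterval n j ⊆ ⋃ i, closedBall (c i) (((2 : ℝ)⁻¹ ^ n) ^ γ)

variable {f : ℝ → X} {γ : ℝ} {K n₀ : ℕ}

theorem HasDyadicBallCovers.exists_image_dyadicLength_Icc_subset
    (hf : HasDyadicBallCovers f γ K n₀) {n : ℕ} (hn : n₀ ≤ n) {a : ℝ} (ha : 0 ≤ a) :
    ∃ c : Fin 2 × Fin K → X, f '' (Icc a (a + 2⁻¹ ^ n) ∩ Icc 0 1) ⊆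
      ⋃ k, closedBall (c k) (((2 : ℝ)⁻¹ ^ n) ^ γ) := by
  obtain ⟨j, hj, hsub⟩ := exists_dyadicInterval_cover_Icc_inter_unitInterval ha n
  choose c hc using fun b => hf n hn (j b) (hj b).1 (hj b).2
  refine ⟨fun k => c k.1 k.2, ?_⟩
  rintro _ ⟨x, hx, rfl⟩
  obtain ⟨b, hb⟩ := mem_iUnion.1 (hsub hx)
  obtain ⟨i, hi⟩ := mem_iUnion.1 (hc b ⟨x, hb, rfl⟩)
  exact mem_iUnion.2 ⟨(b, i), hi⟩

theorem HasDyadicBallCovers.hausdorffMeasure_image_eq_zero [MeasurableSpace X] [BorelSpace X]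
    (hf : HasDyadicBallCovers f γ K n₀) (hγ : 0 < γ) {E : Set ℝ} (hE : E ⊆ Icc 0 1) {t : ℝ}
    (ht : 0 < t) (hEt : μH[t] E = 0) :
    μH[t / γ] (f '' E) = 0 := by
  have hradius : Tendsto (fun N : ℕ => 2 * ENNReal.ofReal (((2 : ℝ)⁻¹ ^ N) ^ γ)) atTop (𝓝 0) := by
    simp_rw [← Real.rpow_pow_comm (by norm_num : (0 : ℝ) ≤ 2⁻¹)]
    simpa using ENNReal.Tendsto.const_mul (ENNReal.tendsto_ofReal
      (tendsto_pow_atTop_nhds_zero_of_lt_one (by positivity)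
        (Real.rpow_lt_one (by norm_num) (by norm_num) hγ))) (Or.inr ofNat_ne_top)
  refine hausdorffMeasure_eq_zero_of_forall_cover (ι := ℕ × (Fin 2 × Fin K))
    (C := 2 * K * 2 ^ (t / γ) * (2 ^ t + 1)) (by finiteness) fun ε hε => ?_
  obtain ⟨N, hNε, hN₀⟩ :=
    ((hradius.eventually (eventually_le_nhds hε)).and (eventually_ge_atTop n₀)).exists
  obtain ⟨a, n, han, hEcov, hsum⟩ := exists_dyadicLength_Icc_cover hE ht hEt hε N
  choose c hc using fun i =>
    hf.exists_image_dyadicLength_Icc_subset (hN₀.trans (han i).2) (han i).1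
  refine ⟨fun p => closedBall (c p.1 p.2) (((2 : ℝ)⁻¹ ^ n p.1) ^ γ), ?_, fun p => ?_, ?_⟩
  · rintro _ ⟨x, hx, rfl⟩
    obtain ⟨i, hi⟩ := mem_iUnion.1 (hEcov hx)
    obtain ⟨k, hk⟩ := mem_iUnion.1 (hc i ⟨x, hi, rfl⟩)
    exact mem_iUnion.2 ⟨(i, k), hk⟩
  · refine (ediam_closedBall_le_two_mul _ (by positivity)).trans (le_trans ?_ hNε)
    gcongr 2 * ENNReal.ofReal ?_
    exact Real.rpow_le_rpow (by positivity)
      (pow_le_pow_of_le_one (by norm_num) (by norm_num) (han p.1).2) hγ.le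
  calc _ ≤ Fintype.card (Fin 2 × Fin K) * 2 ^ (t / γ) *
        ∑' i, ENNReal.ofReal ((2⁻¹ ^ n i) ^ t) := tsum_ediam_closedBall_rpow_le c n hγ ht.le
    _ ≤ Fintype.card (Fin 2 × Fin K) * 2 ^ (t / γ) * ((2 ^ t + 1) * ε) := by gcongr
    _ = 2 * K * 2 ^ (t / γ) * (2 ^ t + 1) * ε := by
        simp only [Fintype.card_prod, Fintype.card_fin, Nat.cast_mul, Nat.cast_ofNat]
        ring

end DyadicBallCovers

theorem stmt4_general {d : ℕ} (f : ℝ → EuclideanSpace ℝ (Fin d))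
    (γ : ℝ) (hγ : 0 < γ)
    (K : ℕ) (n₀ : ℕ)
    (hcov : ∀ n : ℕ, n₀ ≤ n → ∀ j : ℕ, 1 ≤ j → j ≤ 2 ^ n →
      ∃ c : Fin K → EuclideanSpace ℝ (Fin d),
        f '' Set.Icc (((j : ℝ) - 1) * (2 : ℝ)⁻¹ ^ n) ((j : ℝ) * (2 : ℝ)⁻¹ ^ n)
          ⊆ ⋃ i : Fin K, Metric.closedBall (c i) (((2 : ℝ)⁻¹ ^ n) ^ γ)) :
    ∀ E : Set ℝ, E ⊆ Set.Icc 0 1 → MeasurableSet E →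
      dimH (f '' E) ≤ dimH E / ENNReal.ofReal γ := by
  intro E hE _
  have hf : HasDyadicBallCovers f γ K n₀ := hcov
  exact dimH_le_div_of_hausdorffMeasure_eq_zero hγ fun t ht hEt =>
    hf.hausdorffMeasure_image_eq_zero hγ hE ht hEt

/-- If, for all sufficiently large `n`, the image under `f` of every dyadic
interval `[(j-1) 2^{-n}, j 2^{-n}] ⊆ [0,1]` is covered by `K` balls of radius `(2^{-n})^γ`
(where `0 < γ < H`), then for every Borel set `E ⊆ [0,1]`,
`dim_H f(E) ≤ (dim_H E) / γ`. -/
theorem stmt4 {d : ℕ} (f : ℝ → EuclideanSpace ℝ (Fin d))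
    (H γ : ℝ) (hH : 0 < H) (hγ : 0 < γ) (hγH : γ < H)
    (K : ℕ) (hK : 1 ≤ K) (n₀ : ℕ)
    (hcov : ∀ n : ℕ, n₀ ≤ n → ∀ j : ℕ, 1 ≤ j → j ≤ 2 ^ n →
      ∃ c : Fin K → EuclideanSpace ℝ (Fin d),
        f '' Set.Icc (((j : ℝ) - 1) * (2 : ℝ)⁻¹ ^ n) ((j : ℝ) * (2 : ℝ)⁻¹ ^ n)
          ⊆ ⋃ i : Fin K, Metric.closedBall (c i) (((2 : ℝ)⁻¹ ^ n) ^ γ)) :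
    ∀ E : Set ℝ, E ⊆ Set.Icc 0 1 → MeasurableSet E →
      dimH (f '' E) ≤ dimH E / ENNReal.ofReal γ :=
  stmt4_general f γ hγ K n₀ hcov
end
end

section
/- Suppose f : [0, T] → R^d has the following property: there are constants K ≥ 1, 0 < γ < 1/H and n_0 such that for all n ≥ n_0 and every dyadic cube B ⊆ [−m, m]^d of side length 2^{−n}, the preimage f^{−1}(B) ∩ [0, T] can be covered by at most K intervals of length 2^{−γ n}. Then for every Borel set F ⊆ [−m, m]^d, dim_H ( f^{−1}(F) ∩ [0, T] ) ≤ (dim_H F)/γ. -/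
/-!
A set `S ⊆ F` of diameter `r ≤ 2^{-n₀}` meets at most `3^d` dyadic cubes of the generation `n`
with `2^{-n-1} < r ≤ 2^{-n}`, so `f⁻¹(S) ∩ [0,T]` is covered by `3^d K` intervals of length
`2^{-γn} ≤ 2^γ r^γ`. A cover of `F` by sets `S_k` with `∑ (diam S_k)^s` small therefore yields a
cover of `f⁻¹(F) ∩ [0,T]` by sets of small diameter with `∑ diam^{s/γ}` small. Hence
`μH[s] F = 0` forces `μH[s/γ] (f⁻¹(F) ∩ [0,T]) = 0`, which gives the bound on dimensions.
-/

open MeasureTheory Metric Set ENNReal Filter Topology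

noncomputable section

namespace MeasureTheory.Measure

variable {X : Type*} [EMetricSpace X] [MeasurableSpace X] [BorelSpace X]

theorem exists_cover_tsum_ediam_rpow_le_of_hausdorffMeasure_eq_zero {d : ℝ} (hd : 0 < d)
    {s : Set X} (h : μH[d] s = 0) {ρ ε : ℝ≥0∞} (hρ : 0 < ρ) (hε : 0 < ε) :
    ∃ t : ℕ → Set X, s ⊆ ⋃ n, t n ∧ (∀ n, ediam (t n) ≤ ρ) ∧ ∑' n, ediam (t n) ^ d ≤ ε := by
  have hlt : (⨅ (t : ℕ → Set X) (_ : s ⊆ ⋃ n, t n) (_ : ∀ n, ediam (t n) ≤ ρ),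
      ∑' n, ⨆ _ : (t n).Nonempty, ediam (t n) ^ d) < ε := by
    refine lt_of_le_of_lt ?_ (h ▸ hε)
    rw [hausdorffMeasure_apply]
    exact le_iSup₂ (f := fun r _ => ⨅ (t : ℕ → Set X) (_ : s ⊆ ⋃ n, t n)
      (_ : ∀ n, ediam (t n) ≤ r), ∑' n, ⨆ _ : (t n).Nonempty, ediam (t n) ^ d) ρ hρ
  simp only [iInf_lt_iff] at hlt
  obtain ⟨t, hst, htρ, htε⟩ := hlt
  refine ⟨t, hst, htρ, le_of_eq_of_le (tsum_congr fun n => ?_) htε.le⟩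
  rcases (t n).eq_empty_or_nonempty with hn | hn
  · simp [hn, hd]
  · simp [hn]

theorem hausdorffMeasure_eq_zero_of_forall_cover {ι : Type*} [Countable ι] {d : ℝ} {s : Set X}
    (h : ∀ ρ > 0, ∀ ε > 0, ∃ t : ι → Set X,
      s ⊆ ⋃ i, t i ∧ (∀ i, ediam (t i) ≤ ρ) ∧ ∑' i, ediam (t i) ^ d ≤ ε) :
    μH[d] s = 0 := by
  refine le_antisymm (ENNReal.le_of_forall_pos_le_add fun ε hε _ => ?_) zero_le
  have hpos : ∀ n : ℕ, 0 < (n : ℝ≥0∞)⁻¹ := fun n => ENNReal.inv_pos.2 (natCast_ne_top n)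
  choose t hst htρ htε using fun n : ℕ => h _ (hpos n) ε (coe_pos.2 hε)
  calc μH[d] s ≤ liminf (fun n => ∑' i, ediam (t n i) ^ d) atTop :=
        hausdorffMeasure_le_liminf_tsum d s _ ENNReal.tendsto_inv_nat_nhds_zero t
          (Eventually.of_forall htρ) (Eventually.of_forall hst)
    _ ≤ ε := liminf_le_of_frequently_le' (Frequently.of_forall htε)
    _ = 0 + ε := (zero_add _).symm

end MeasureTheory.Measure

open MeasureTheory.Measure

section PreimageCover

variable {X Y ι : Type*} [EMetricSpace X] [EMetricSpace Y] [Fintype ι] {f : X → Y} {P : Set X}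
  {F : Set Y} {γ : ℝ} {C r₀ : ℝ≥0∞}
  (hcov : ∀ r, 0 < r → r ≤ r₀ → ∀ S ⊆ F, ediam S ≤ r →
    ∃ U : ι → Set X, f ⁻¹' S ∩ P ⊆ ⋃ i, U i ∧ ∀ i, ediam (U i) ≤ C * r ^ γ)
include hcov

theorem exists_cover_preimage_inter_tsum_le [MeasurableSpace Y] [BorelSpace Y] {s : ℝ}
    (hs : 0 < s) (hγ : 0 < γ) (hF : μH[s] F = 0) {ρ ε : ℝ≥0∞} (hρ : 0 < ρ) (hρr₀ : ρ ≤ r₀)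
    (hε : ε ≠ 0) :
    ∃ U : ℕ × ι → Set X, f ⁻¹' F ∩ P ⊆ ⋃ p, U p ∧ (∀ p, ediam (U p) ≤ C * ρ ^ γ) ∧
      ∑' p, ediam (U p) ^ (s / γ) ≤ Fintype.card ι * C ^ (s / γ) * ε := by
  obtain ⟨t, hFt, htρ, htε⟩ :=
    exists_cover_tsum_ediam_rpow_le_of_hausdorffMeasure_eq_zero hs hF hρ (ENNReal.half_pos hε)
  obtain ⟨η, hη0, hηε⟩ := ENNReal.exists_pos_sum_of_countable (ENNReal.half_pos hε).ne' ℕ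
  -- `hcov` only applies at positive scales: pad `ediam (t k)` up to `r k > 0`,
  -- at a total cost of `∑ η k`
  set r : ℕ → ℝ≥0∞ := fun k => max (ediam (t k)) (min ρ ((η k : ℝ≥0∞) ^ s⁻¹))
  have hr_pos : ∀ k, 0 < r k := fun k =>
    lt_max_of_lt_right (lt_min hρ (ENNReal.rpow_pos (coe_pos.2 (hη0 k)) coe_ne_top))
  have hr_le : ∀ k, r k ≤ ρ := fun k => max_le (htρ k) (min_le_left _ _)
  have hr_rpow : ∀ k, r k ^ s ≤ ediam (t k) ^ s + η k := by
    intro k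
    change max _ _ ^ s ≤ _
    rcases max_choice (ediam (t k)) (min ρ ((η k : ℝ≥0∞) ^ s⁻¹)) with h | h <;> rw [h]
    · exact le_self_add
    · exact le_add_left ((ENNReal.rpow_le_rpow (min_le_right _ _) hs.le).trans_eq
        (ENNReal.rpow_inv_rpow hs.ne' _))
  choose U hUcov hUdiam using fun k => hcov (r k) (hr_pos k) ((hr_le k).trans hρr₀)
    (t k ∩ F) inter_subset_right ((ediam_mono inter_subset_left).trans (le_max_left _ _))
  refine ⟨fun p => U p.1 p.2, ?_, fun p => ?_, ?_⟩
  · rintro x ⟨hxF, hxP⟩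
    obtain ⟨k, hk⟩ := mem_iUnion.1 (hFt hxF)
    obtain ⟨i, hi⟩ := mem_iUnion.1 (hUcov k ⟨⟨hk, hxF⟩, hxP⟩)
    exact mem_iUnion.2 ⟨(k, i), hi⟩
  · exact (hUdiam p.1 p.2).trans (by gcongr; exact hr_le _)
  · have hsγ : 0 ≤ s / γ := (div_pos hs hγ).le
    calc ∑' p : ℕ × ι, ediam (U p.1 p.2) ^ (s / γ)
        ≤ ∑' p : ℕ × ι, C ^ (s / γ) * r p.1 ^ s := ENNReal.tsum_le_tsum fun p => by
          refine (ENNReal.rpow_le_rpow (hUdiam p.1 p.2) hsγ).trans_eq ?_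
          rw [ENNReal.mul_rpow_of_nonneg _ _ hsγ, ← ENNReal.rpow_mul, mul_div_cancel₀ _ hγ.ne']
      _ = Fintype.card ι * C ^ (s / γ) * ∑' k, r k ^ s := by
          rw [ENNReal.tsum_prod (f := fun k (_ : ι) => C ^ (s / γ) * r k ^ s),
            ← ENNReal.tsum_mul_left]
          simp [tsum_fintype, mul_assoc]
      _ ≤ Fintype.card ι * C ^ (s / γ) * (ε / 2 + ε / 2) := by
          gcongr
          calc ∑' k, r k ^ s ≤ ∑' k, (ediam (t k) ^ s + η k) := ENNReal.tsum_le_tsum hr_rpow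
            _ = ∑' k, ediam (t k) ^ s + ∑' k, (η k : ℝ≥0∞) := ENNReal.tsum_add
            _ ≤ ε / 2 + ε / 2 := add_le_add htε hηε.le
      _ = Fintype.card ι * C ^ (s / γ) * ε := by rw [ENNReal.add_halves]

theorem hausdorffMeasure_preimage_inter_eq_zero [MeasurableSpace X] [BorelSpace X]
    [MeasurableSpace Y] [BorelSpace Y] {s : ℝ} (hs : 0 < s) (hγ : 0 < γ) (hC : C ≠ ∞)
    (hr₀ : 0 < r₀) (hF : μH[s] F = 0) : μH[s / γ] (f ⁻¹' F ∩ P) = 0 := by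
  refine hausdorffMeasure_eq_zero_of_forall_cover (ι := ℕ × ι) fun ρ' hρ' ε hε => ?_
  have hsmall : ∀ᶠ ρ in 𝓝 0, ρ ≤ r₀ ∧ C * ρ ^ γ ≤ ρ' :=
    (eventually_le_nhds hr₀).and
      ((ENNReal.tendsto_const_mul_rpow_nhds_zero_of_pos hC hγ).eventually (eventually_le_nhds hρ'))
  obtain ⟨n, hnr₀, hnρ'⟩ := (ENNReal.tendsto_inv_nat_nhds_zero.eventually hsmall).exists
  have hM : (Fintype.card ι : ℝ≥0∞) * C ^ (s / γ) ≠ ∞ :=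
    mul_ne_top (natCast_ne_top _) (rpow_ne_top_of_nonneg (div_pos hs hγ).le hC)
  obtain ⟨U, hUcov, hUdiam, hUsum⟩ := exists_cover_preimage_inter_tsum_le hcov hs hγ hF
    (ENNReal.inv_pos.2 (natCast_ne_top n)) hnr₀ (ENNReal.div_pos hε.ne' hM).ne'
  exact ⟨U, hUcov, fun p => (hUdiam p).trans hnρ', hUsum.trans ENNReal.mul_div_le⟩

theorem dimH_preimage_inter_le (hγ : 0 < γ) (hC : C ≠ ∞) (hr₀ : 0 < r₀) :
    dimH (f ⁻¹' F ∩ P) ≤ dimH F / ENNReal.ofReal γ := by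
  borelize X Y
  refine dimH_le fun d hd => ?_
  rw [ENNReal.le_div_iff_mul_le (Or.inl (ofReal_pos.2 hγ).ne') (Or.inl ofReal_ne_top)]
  by_contra! hlt
  have hdγ : dimH F < (d * γ.toNNReal : NNReal) := by rwa [coe_mul]
  have hd0 : 0 < d := by simpa [Real.toNNReal_pos.2 hγ] using pos_of_gt hdγ
  have h0 := hausdorffMeasure_preimage_inter_eq_zero hcov (mul_pos (NNReal.coe_pos.2 hd0) hγ)
    hγ hC hr₀ (by simpa [Real.coe_toNNReal γ hγ.le] using hausdorffMeasure_of_dimH_lt hdγ)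
  rw [mul_div_cancel_right₀ _ hγ.ne'] at h0
  simp [h0] at hd

end PreimageCover

section Dyadic

variable {d : ℕ}

def dyadicCube (n : ℕ) (j : Fin d → ℤ) : Set (EuclideanSpace ℝ (Fin d)) :=
  {y | ∀ i, (j i : ℝ) * (2 : ℝ)⁻¹ ^ n ≤ y i ∧ y i ≤ ((j i : ℝ) + 1) * (2 : ℝ)⁻¹ ^ n}

/-- The `min` puts the face `y i = m` of `[-m, m]^d` into the last cube of the grid. -/
def dyadicIndex (m n : ℕ) (y : EuclideanSpace ℝ (Fin d)) : Fin d → ℤ :=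
  fun i => min ⌊y i * 2 ^ n⌋ (m * 2 ^ n - 1)

theorem mem_dyadicCube_iff {n : ℕ} {j : Fin d → ℤ} {y : EuclideanSpace ℝ (Fin d)} :
    y ∈ dyadicCube n j ↔ ∀ i, (j i : ℝ) ≤ y i * 2 ^ n ∧ y i * 2 ^ n ≤ j i + 1 := by
  simp only [dyadicCube, mem_ofPred_eq, inv_pow, ← div_eq_mul_inv,
    div_le_iff₀ (pow_pos (two_pos : (0 : ℝ) < 2) n),
    le_div_iff₀ (pow_pos (two_pos : (0 : ℝ) < 2) n)]

variable {m n : ℕ} {y z : EuclideanSpace ℝ (Fin d)}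

theorem mem_dyadicCube_dyadicIndex (hy : ∀ i, |y i| ≤ m) :
    y ∈ dyadicCube n (dyadicIndex m n y) := by
  refine mem_dyadicCube_iff.2 fun i => ?_
  have hyi : y i * 2 ^ n ≤ m * 2 ^ n := by gcongr; exact (abs_le.1 (hy i)).2
  simp only [dyadicIndex, Int.cast_min, Int.cast_sub, Int.cast_mul, Int.cast_natCast,
    Int.cast_pow, Int.cast_ofNat, Int.cast_one]
  exact ⟨(min_le_left _ _).trans (Int.floor_le _),
    by rw [← min_add_add_right, sub_add_cancel]; exact le_min (Int.lt_floor_add_one _).le hyi⟩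

theorem dyadicIndex_mem_range (hm : 1 ≤ m) (hy : ∀ i, |y i| ≤ m) (i : Fin d) :
    -(m * 2 ^ n : ℤ) ≤ dyadicIndex m n y i ∧ dyadicIndex m n y i ≤ m * 2 ^ n - 1 := by
  have hM : (1 : ℤ) ≤ m * 2 ^ n := one_le_mul_of_one_le_of_one_le (by exact_mod_cast hm)
    (one_le_pow₀ one_le_two)
  refine ⟨le_min (Int.le_floor.2 ?_) (by omega), min_le_right _ _⟩
  push_cast
  have := (abs_le.1 (hy i)).1
  nlinarith [pow_pos (two_pos : (0 : ℝ) < 2) n]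

theorem abs_dyadicIndex_sub_le (h : dist y z ≤ (2 : ℝ)⁻¹ ^ n) (i : Fin d) :
    |dyadicIndex m n y i - dyadicIndex m n z i| ≤ 1 := by
  have hyz : |y i * 2 ^ n - z i * 2 ^ n| ≤ 1 := by
    rw [← sub_mul, abs_mul, abs_of_pos (pow_pos (two_pos : (0 : ℝ) < 2) n), ← Real.dist_eq]
    calc dist (y i) (z i) * 2 ^ n ≤ (2 : ℝ)⁻¹ ^ n * 2 ^ n := by
          gcongr; exact (PiLp.dist_apply_le y z i).trans h
      _ = 1 := by rw [← mul_pow, inv_mul_cancel₀ two_ne_zero, one_pow]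
  have hfloor : ∀ u v : ℝ, u ≤ v + 1 → ⌊u⌋ ≤ ⌊v⌋ + 1 := fun u v huv =>
    (Int.floor_le_floor huv).trans_eq (Int.floor_add_one v)
  obtain ⟨h₁, h₂⟩ := abs_le.1 hyz
  refine (abs_min_sub_min_le_max _ _ _ _).trans ?_
  rw [sub_self, abs_zero, max_eq_left (abs_nonneg _), abs_le]
  constructor <;> linarith [hfloor (y i * 2 ^ n) (z i * 2 ^ n) (by linarith),
    hfloor (z i * 2 ^ n) (y i * 2 ^ n) (by linarith)]

end Dyadic

section DyadicCover

variable {d m K n₀ : ℕ} {f : ℝ → EuclideanSpace ℝ (Fin d)} {T γ : ℝ}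
  (hcov : ∀ n : ℕ, n₀ ≤ n → ∀ j : Fin d → ℤ,
    (∀ i, -(m * 2 ^ n : ℤ) ≤ j i ∧ j i ≤ m * 2 ^ n - 1) →
    ∃ a : Fin K → ℝ, f ⁻¹' dyadicCube n j ∩ Icc 0 T ⊆ ⋃ i, Icc (a i) (a i + 2 ^ (-(γ * n))))
include hcov

theorem exists_cover_of_dyadicIndex_eq (hm : 1 ≤ m) {n : ℕ} (hn : n₀ ≤ n) (j : Fin d → ℤ) :
    ∃ a : Fin K → ℝ, ∀ x ∈ Icc 0 T, (∀ i, |f x i| ≤ m) → dyadicIndex m n (f x) = j →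
      x ∈ ⋃ i, Icc (a i) (a i + 2 ^ (-(γ * n))) := by
  by_cases hj : ∀ i, -(m * 2 ^ n : ℤ) ≤ j i ∧ j i ≤ m * 2 ^ n - 1
  · obtain ⟨a, ha⟩ := hcov n hn j hj
    refine ⟨a, fun x hx hfx hfj => ha ⟨?_, hx⟩⟩
    rw [mem_preimage, ← hfj]
    exact mem_dyadicCube_dyadicIndex hfx
  · exact ⟨0, fun x _ hfx hfj => (hj (hfj ▸ dyadicIndex_mem_range hm hfx)).elim⟩

theorem exists_cover_preimage_of_ediam_le (hm : 1 ≤ m) {n : ℕ} (hn : n₀ ≤ n)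
    {S : Set (EuclideanSpace ℝ (Fin d))} (hS : S ⊆ {y | ∀ i, |y i| ≤ m})
    (hdiam : ediam S ≤ ENNReal.ofReal ((2 : ℝ)⁻¹ ^ n)) :
    ∃ U : (Fin d → Icc (-1 : ℤ) 1) × Fin K → Set ℝ, f ⁻¹' S ∩ Icc 0 T ⊆ ⋃ p, U p ∧
      ∀ p, ediam (U p) ≤ ENNReal.ofReal (2 ^ (-(γ * n))) := by
  rcases S.eq_empty_or_nonempty with rfl | ⟨y₀, hy₀⟩
  · exact ⟨fun _ => ∅, by simp, by simp⟩
  choose a ha using fun e : Fin d → Icc (-1 : ℤ) 1 =>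
    exists_cover_of_dyadicIndex_eq hcov hm hn (dyadicIndex m n y₀ + fun i => (e i : ℤ))
  refine ⟨fun p => Icc (a p.1 p.2) (a p.1 p.2 + 2 ^ (-(γ * n))), ?_, fun p => ?_⟩
  · rintro x ⟨hxS, hxT⟩
    have hdist : dist (f x) y₀ ≤ (2 : ℝ)⁻¹ ^ n :=
      (edist_le_ofReal (by positivity)).1 ((edist_le_ediam_of_mem (s := S) hxS hy₀).trans hdiam)
    have hnear : ∀ i, dyadicIndex m n (f x) i - dyadicIndex m n y₀ i ∈ Icc (-1 : ℤ) 1 :=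
      fun i => abs_le.1 (abs_dyadicIndex_sub_le hdist i)
    obtain ⟨k, hk⟩ := mem_iUnion.1
      (ha (fun i => ⟨_, hnear i⟩) x hxT (hS hxS) (by ext i; simp))
    exact mem_iUnion.2 ⟨(_, k), hk⟩
  · rw [Real.ediam_Icc, add_sub_cancel_left]

theorem exists_cover_preimage_of_ediam_le_rpow (hm : 1 ≤ m) (hγ : 0 ≤ γ) {r : ℝ≥0∞}
    (hr : 0 < r) (hr₀ : r ≤ ENNReal.ofReal ((2 : ℝ)⁻¹ ^ n₀))
    {S : Set (EuclideanSpace ℝ (Fin d))} (hS : S ⊆ {y | ∀ i, |y i| ≤ m}) (hdiam : ediam S ≤ r) :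
    ∃ U : (Fin d → Icc (-1 : ℤ) 1) × Fin K → Set ℝ, f ⁻¹' S ∩ Icc 0 T ⊆ ⋃ p, U p ∧
      ∀ p, ediam (U p) ≤ ENNReal.ofReal (2 ^ γ) * r ^ γ := by
  have hr_top : r ≠ ∞ := ne_top_of_le_ne_top ofReal_ne_top hr₀
  have hρ : 0 < r.toReal := toReal_pos hr.ne' hr_top
  have hρ₀ : r.toReal ≤ (2 : ℝ)⁻¹ ^ n₀ := toReal_le_of_le_ofReal (by positivity) hr₀
  obtain ⟨n, hlt, hle⟩ := exists_nat_pow_near_of_lt_one hρ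
    (hρ₀.trans (pow_le_one₀ (by norm_num) (by norm_num))) (by norm_num : (0 : ℝ) < 2⁻¹)
    (by norm_num)
  have hn : n₀ ≤ n := by
    by_contra! h
    exact (hlt.trans_le hρ₀).not_ge (pow_le_pow_of_le_one (by norm_num) (by norm_num) h)
  obtain ⟨U, hU, hUdiam⟩ := exists_cover_preimage_of_ediam_le hcov hm hn hS
    (hdiam.trans (le_ofReal_iff_toReal_le hr_top (by positivity) |>.2 hle))
  refine ⟨U, hU, fun p => (hUdiam p).trans ?_⟩
  rw [← ofReal_toReal hr_top, ofReal_rpow_of_pos hρ, ← ofReal_mul (by positivity)]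
  refine ofReal_le_ofReal ?_
  calc (2 : ℝ) ^ (-(γ * n)) = 2 ^ γ * ((2 : ℝ)⁻¹ ^ (n + 1)) ^ γ := by
        rw [inv_pow, Real.inv_rpow (by positivity), ← Real.rpow_natCast,
          ← Real.rpow_mul zero_le_two, ← Real.rpow_neg zero_le_two, ← Real.rpow_add two_pos]
        congr 1
        push_cast
        ring
    _ ≤ 2 ^ γ * r.toReal ^ γ := by gcongr

end DyadicCover

theorem stmt5_general {d : ℕ} (m : ℕ) (hm : 1 ≤ m)
    (f : ℝ → EuclideanSpace ℝ (Fin d))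
    (T γ : ℝ) (hγ : 0 < γ)
    (K : ℕ) (n₀ : ℕ)
    (hcov : ∀ n : ℕ, n₀ ≤ n → ∀ j : Fin d → ℤ,
      (∀ i, -(m * 2 ^ n : ℤ) ≤ j i ∧ j i ≤ (m * 2 ^ n : ℤ) - 1) →
      ∃ a : Fin K → ℝ,
        f ⁻¹' {y : EuclideanSpace ℝ (Fin d) |
            ∀ i, (j i : ℝ) * (2 : ℝ)⁻¹ ^ n ≤ y i ∧ y i ≤ ((j i : ℝ) + 1) * (2 : ℝ)⁻¹ ^ n}
          ∩ Set.Icc 0 T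
        ⊆ ⋃ i : Fin K, Set.Icc (a i) (a i + (2 : ℝ) ^ (-(γ * (n : ℝ))))) :
    ∀ F : Set (EuclideanSpace ℝ (Fin d)),
      F ⊆ {y | ∀ i, |y i| ≤ (m : ℝ)} → MeasurableSet F →
      dimH (f ⁻¹' F ∩ Set.Icc 0 T) ≤ dimH F / ENNReal.ofReal γ := by
  intro F hF _
  exact dimH_preimage_inter_le
    (fun r hr hr₀ S hS hdiam => exists_cover_preimage_of_ediam_le_rpow hcov hm hγ.le hr hr₀
      (hS.trans hF) hdiam)
    hγ ofReal_ne_top (ofReal_pos.2 (by positivity))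

/-- If, for all `n ≥ n₀`, the preimage under `f : [0,T] → ℝ^d` of every dyadic
cube `∏_i [j_i 2^{-n}, (j_i+1) 2^{-n}] ⊆ [-m, m]^d` intersected with `[0,T]` is covered by
at most `K` intervals of length `2^{-γ n}` (where `0 < γ < 1/H`), then for every Borel set
`F ⊆ [-m, m]^d`, `dim_H (f⁻¹(F) ∩ [0,T]) ≤ (dim_H F) / γ`. -/
theorem stmt5 {d : ℕ} (m : ℕ) (hm : 1 ≤ m)
    (f : ℝ → EuclideanSpace ℝ (Fin d))
    (T H γ : ℝ) (hT : 0 < T) (hH : 0 < H) (hγ : 0 < γ) (hγH : γ < 1 / H)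
    (K : ℕ) (hK : 1 ≤ K) (n₀ : ℕ)
    (hcov : ∀ n : ℕ, n₀ ≤ n → ∀ j : Fin d → ℤ,
      (∀ i, -(m * 2 ^ n : ℤ) ≤ j i ∧ j i ≤ (m * 2 ^ n : ℤ) - 1) →
      ∃ a : Fin K → ℝ,
        f ⁻¹' {y : EuclideanSpace ℝ (Fin d) |
            ∀ i, (j i : ℝ) * (2 : ℝ)⁻¹ ^ n ≤ y i ∧ y i ≤ ((j i : ℝ) + 1) * (2 : ℝ)⁻¹ ^ n}
          ∩ Set.Icc 0 T
        ⊆ ⋃ i : Fin K, Set.Icc (a i) (a i + (2 : ℝ) ^ (-(γ * (n : ℝ))))) :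
    ∀ F : Set (EuclideanSpace ℝ (Fin d)),
      F ⊆ {y | ∀ i, |y i| ≤ (m : ℝ)} → MeasurableSet F →
      dimH (f ⁻¹' F ∩ Set.Icc 0 T) ≤ dimH F / ENNReal.ofReal γ :=
  stmt5_general m hm f T γ hγ K n₀ hcov
end
end

section
/- Let p : (0, ∞) → [0, ∞) be a bounded probability density satisfying p(s) ≤ C_ρ s^{−1−ρ} for s ≥ 1, where ρ ∈ (0, 1). Let H, ζ, d, ε > 0 with (H+ζ)(d−ε) < 1, let 0 < r, t with r^{1/(H+ζ)} ≤ t^{1/ρ}, and suppose 0 ≤ F(s) ≤ C_2 min{1, (r / (t^{1/ρ} s)^{H+ζ})^{d−ε}} for all s > 0. Then ∫_0^∞ F(s) p(s) ds ≤ C ( r^{1/(H+ζ)} / t^{1/ρ} + (r / t^{(H+ζ)/ρ})^{d−ε} ), where C depends only on the stated constants and on ∫_0^∞ s^{−(H+ζ)(d−ε)} p(s) ds < ∞. -/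
/-! The second branch of the minimum alone suffices: it factors as
`(r / t^{(H+ζ)/ρ})^{d-ε} · s^{-(H+ζ)(d-ε)}`, so integrating against `p` bounds the integral by
`C₂` times the finite moment `∫_0^∞ s^{-(H+ζ)(d-ε)} p(s) ds` times the second term of the bound. -/

open MeasureTheory Set

theorem Real.div_mul_rpow_rpow_eq {r u s : ℝ} (hr : 0 ≤ r) (hu : 0 ≤ u) (hs : 0 < s) (a b : ℝ) :
    (r / (u * s) ^ a) ^ b = (r / u ^ a) ^ b * s ^ (-(a * b)) := by
  have hsplit : r / (u * s) ^ a = r / u ^ a * s ^ (-a) := by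
    rw [Real.mul_rpow hu hs.le, Real.rpow_neg hs.le, div_mul_eq_div_div, div_eq_mul_inv _ (s ^ a)]
  rw [hsplit, Real.mul_rpow (by positivity) (by positivity), ← Real.rpow_mul hs.le, neg_mul]

theorem integral_mul_le_const_mul_integral {α : Type*} [MeasurableSpace α] {μ : Measure α}
    {F w p : α → ℝ} {c : ℝ} (hp : 0 ≤ᵐ[μ] p) (hF : ∀ᵐ x ∂μ, 0 ≤ F x ∧ F x ≤ c * w x)
    (hwp : Integrable (fun x => w x * p x) μ) :
    ∫ x, F x * p x ∂μ ≤ c * ∫ x, w x * p x ∂μ := by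
  rw [← integral_const_mul]
  refine integral_mono_of_nonneg ?_ (hwp.const_mul c) ?_
  · filter_upwards [hp, hF] with x hpx hFx using mul_nonneg hFx.1 hpx
  · filter_upwards [hp, hF] with x hpx hFx
    simpa only [mul_assoc] using mul_le_mul_of_nonneg_right hFx.2 hpx

theorem stmt17_general (ρ H ζ ε C₂ : ℝ) (d : ℕ)
    (hC₂ : 0 < C₂)
    (p : ℝ → ℝ) (hp_nonneg : ∀ s, 0 ≤ p s)
    (hmoment : IntegrableOn
      (fun s => s ^ (-((H + ζ) * ((d : ℝ) - ε))) * p s) (Set.Ioi 0)) :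
    ∃ C > 0, ∀ (r t : ℝ) (F : ℝ → ℝ), 0 < r → 0 < t →
      r ^ (1 / (H + ζ)) ≤ t ^ (1 / ρ) → Measurable F →
      (∀ s : ℝ, 0 < s → 0 ≤ F s ∧
        F s ≤ C₂ * min 1 ((r / (t ^ (1 / ρ) * s) ^ (H + ζ)) ^ ((d : ℝ) - ε))) →
      (∫ s in Set.Ioi (0 : ℝ), F s * p s) ≤
        C * (r ^ (1 / (H + ζ)) / t ^ (1 / ρ)
          + (r / t ^ ((H + ζ) / ρ)) ^ ((d : ℝ) - ε)) := by
  set K := ∫ s in Ioi (0 : ℝ), s ^ (-((H + ζ) * ((d : ℝ) - ε))) * p s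
  have hK : 0 ≤ K := setIntegral_nonneg measurableSet_Ioi fun s hs =>
    mul_nonneg (Real.rpow_nonneg (le_of_lt hs) _) (hp_nonneg s)
  refine ⟨C₂ * K + 1, by positivity, fun r t F hr ht _ _ hF => ?_⟩
  set A := (r / t ^ ((H + ζ) / ρ)) ^ ((d : ℝ) - ε)
  have htρ : (t ^ (1 / ρ)) ^ (H + ζ) = t ^ ((H + ζ) / ρ) := by
    rw [← Real.rpow_mul ht.le, one_div_mul_eq_div]
  have hF_le : ∀ s ∈ Ioi (0 : ℝ),
      0 ≤ F s ∧ F s ≤ C₂ * A * s ^ (-((H + ζ) * ((d : ℝ) - ε))) := fun s hs => by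
    refine ⟨(hF s hs).1, (hF s hs).2.trans ?_⟩
    rw [mul_assoc, Real.div_mul_rpow_rpow_eq hr.le (by positivity) hs, htρ]
    exact mul_le_mul_of_nonneg_left (min_le_right _ _) hC₂.le
  calc (∫ s in Ioi (0 : ℝ), F s * p s) ≤ C₂ * A * K :=
        integral_mul_le_const_mul_integral (ae_restrict_of_forall_mem measurableSet_Ioi
          fun s _ => hp_nonneg s) (ae_restrict_of_forall_mem measurableSet_Ioi hF_le) hmoment
    _ = (C₂ * K) * A := by ring
    _ ≤ (C₂ * K + 1) * (r ^ (1 / (H + ζ)) / t ^ (1 / ρ) + A) := by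
        gcongr
        · linarith
        · exact le_add_of_nonneg_left (by positivity)

/-- For a bounded probability density `p` on `(0,∞)` with decay
`p(s) ≤ C_ρ s^{-1-ρ}` for `s ≥ 1`, if `(H+ζ)(d-ε) < 1`, `r^{1/(H+ζ)} ≤ t^{1/ρ}`, and
`0 ≤ F(s) ≤ C₂ min{1, (r/(t^{1/ρ} s)^{H+ζ})^{d-ε}}`, then
`∫_0^∞ F(s) p(s) ds ≤ C (r^{1/(H+ζ)}/t^{1/ρ} + (r/t^{(H+ζ)/ρ})^{d-ε})`, where `C`
depends only on the stated constants and on `∫_0^∞ s^{-(H+ζ)(d-ε)} p(s) ds < ∞`. -/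
theorem stmt17 (ρ H ζ ε C₂ Cρ M : ℝ) (d : ℕ)
    (hρ : 0 < ρ) (hρ1 : ρ < 1) (hH : 0 < H) (hζ : 0 < ζ) (hε : 0 < ε) (hεd : ε < d)
    (hcrit : (H + ζ) * ((d : ℝ) - ε) < 1) (hC₂ : 0 < C₂) (hCρ : 0 < Cρ) (hM : 0 < M)
    (p : ℝ → ℝ) (hp_meas : Measurable p) (hp_nonneg : ∀ s, 0 ≤ p s)
    (hp_bdd : ∀ s, p s ≤ M)
    (hp_prob : (∫ s in Set.Ioi (0 : ℝ), p s) = 1)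
    (hp_int : IntegrableOn p (Set.Ioi 0))
    (hp_decay : ∀ s : ℝ, 1 ≤ s → p s ≤ Cρ * s ^ (-(1 : ℝ) - ρ))
    (hmoment : IntegrableOn
      (fun s => s ^ (-((H + ζ) * ((d : ℝ) - ε))) * p s) (Set.Ioi 0)) :
    ∃ C > 0, ∀ (r t : ℝ) (F : ℝ → ℝ), 0 < r → 0 < t →
      r ^ (1 / (H + ζ)) ≤ t ^ (1 / ρ) → Measurable F →
      (∀ s : ℝ, 0 < s → 0 ≤ F s ∧
        F s ≤ C₂ * min 1 ((r / (t ^ (1 / ρ) * s) ^ (H + ζ)) ^ ((d : ℝ) - ε))) →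
      (∫ s in Set.Ioi (0 : ℝ), F s * p s) ≤
        C * (r ^ (1 / (H + ζ)) / t ^ (1 / ρ)
          + (r / t ^ ((H + ζ) / ρ)) ^ ((d : ℝ) - ε)) :=
  stmt17_general ρ H ζ ε C₂ d hC₂ p hp_nonneg hmoment
end
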